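/- arXiv:2210.11700 — 3 statements merged into one kernel-verified Lean document; each statement's English description precedes it below -/
import Mathlib

section
/- For an odd positive integer n, the dihedral group D_{2n} of order 2n is homogeneous: for any two subgroups H and K of D_{2n}, every isomorphism from H to K extends to an automorphism of D_{2n}. -/
/-- The Cayley digraph relation of `G` with connection set `S`:
there is an arc from `x` to `y` iff `y = s * x` for some `s ∈ S`. -/
def cayRel {G : Type*} [Group G] (S : Set G) : G → G → Prop :=
  fun x y => y * x⁻¹ ∈ S

/-- The automorphism group of the Cayley digraph `Cay(G,S)`,
as a subgroup of the permutations of the vertex set `G`. -/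
def cayAut {G : Type*} [Group G] (S : Set G) : Subgroup (Equiv.Perm G) where
  carrier := {f | ∀ x y, cayRel S (f x) (f y) ↔ cayRel S x y}
  one_mem' := by intro x y; rfl
  mul_mem' := by
    intro f g hf hg x y
    rw [Equiv.Perm.mul_apply, Equiv.Perm.mul_apply, hf, hg]
  inv_mem' := by
    intro f hf x y
    simpa [Equiv.apply_symm_apply] using (hf (f⁻¹ x) (f⁻¹ y)).symm

/-- `Cay(G,S)` is a CI-digraph: any isomorphic Cayley digraph `Cay(G,T)`
is Cayley isomorphic to it. -/
def IsCIDigraph {G : Type*} [Group G] (S : Set G) : Prop :=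
  ∀ T : Set G, (1 : G) ∉ T → Nonempty (cayRel S ≃r cayRel T) →
    ∃ α : G ≃* G, α '' S = T

/-- `G` has the `m`-DCI property: every Cayley digraph of `G` of out-valency `m`
is a CI-digraph. -/
def HasDCI (G : Type*) [Group G] (m : ℕ) : Prop :=
  ∀ S : Set G, (1 : G) ∉ S → S.ncard = m → IsCIDigraph S

/-- The right regular representation `R(G)` as a subgroup of `Perm G`. -/
def rightReg (G : Type*) [Group G] : Subgroup (Equiv.Perm G) where
  carrier := Set.range fun g : G => Equiv.mulRight g
  one_mem' := ⟨1, by ext x; simp⟩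
  mul_mem' := by
    rintro _ _ ⟨g, rfl⟩ ⟨h, rfl⟩
    exact ⟨h * g, by ext x; simp [mul_assoc]⟩
  inv_mem' := by
    rintro _ ⟨g, rfl⟩
    exact ⟨g⁻¹, by ext x; simp [Equiv.Perm.inv_def]⟩

/-- A subgroup of permutations of `V` is regular if for all `x y : V` there is a
unique element sending `x` to `y`. -/
def IsRegularSubgroup {V : Type*} (H : Subgroup (Equiv.Perm V)) : Prop :=
  ∀ x y : V, ∃! h : H, (h : Equiv.Perm V) x = y

/-!
For odd `n` the reflections of `D_{2n}` are exactly its elements of order `2`, so an isomorphism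
`φ : H ≃* K` sends rotations to rotations and reflections to reflections. The rotations in `H` form
a cyclic group generated by some `r g`, and `φ (r g) = r l` where `l` has the same additive order
as `g`; in `ZMod n` this forces `l = k * g` for a unit `k`, hence `φ (r i) = r (k * i)` on `H`.
The affine automorphism `r i ↦ r (k * i)`, `sr i ↦ sr (k * i + m)` then extends `φ`, where `m` is
chosen to match `φ` on one reflection `sr j ∈ H` (if any); every other reflection of `H` is
`sr j * r (i - j)`.
-/

namespace ZMod

variable {N : ℕ}

lemma addOrderOf_isUnit_mul {u : ZMod N} (hu : IsUnit u) (a : ZMod N) :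
    addOrderOf (u * a) = addOrderOf a :=
  addOrderOf_injective (AddMonoidHom.mulLeft u) hu.mul_right_injective a

lemma addOrderOf_natCast_of_dvd [NeZero N] {d : ℕ} (hd : d ∣ N) :
    addOrderOf (d : ZMod N) = N / d := by
  rw [addOrderOf_coe' N (ne_zero_of_dvd_ne_zero (NeZero.ne N) hd), Nat.gcd_eq_right hd]

lemma exists_unit_mul_eq_of_addOrderOf_eq [NeZero N] {a b : ZMod N}
    (h : addOrderOf a = addOrderOf b) : ∃ u : (ZMod N)ˣ, u * a = b := by
  have unit_mul_form :
      ∀ x : ZMod N, ∃ u : (ZMod N)ˣ, x = u * ((N / addOrderOf x : ℕ) : ZMod N) := by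
    intro x
    obtain ⟨d, hd, u, hu, rfl⟩ := x.eq_unit_mul_divisor
    refine ⟨hu.unit, ?_⟩
    rw [IsUnit.unit_spec, addOrderOf_isUnit_mul hu, addOrderOf_natCast_of_dvd hd,
      Nat.div_div_self hd (NeZero.ne N)]
  obtain ⟨u, hu⟩ := unit_mul_form a
  obtain ⟨v, hv⟩ := unit_mul_form b
  refine ⟨v * u⁻¹, ?_⟩
  rw [hv, ← h]
  nth_rewrite 1 [hu]
  simp [mul_assoc]

end ZMod

lemma MulEquiv.orderOf_coe_apply {G : Type*} [Group G] {H K : Subgroup G} (φ : H ≃* K) (x : H) :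
    orderOf (φ x : G) = orderOf (x : G) := by
  rw [orderOf_submonoid, orderOf_submonoid, φ.orderOf_eq]

namespace DihedralGroup

variable {n : ℕ}

def affineAut (k : (ZMod n)ˣ) (m : ZMod n) : DihedralGroup n ≃* DihedralGroup n where
  toFun
    | r i => r (k * i)
    | sr i => sr (k * i + m)
  invFun
    | r i => r (↑k⁻¹ * i)
    | sr i => sr (↑k⁻¹ * (i - m))
  left_inv := by rintro (i | i) <;> simp
  right_inv := by rintro (i | i) <;> simp
  map_mul' := by rintro (i | i) (j | j) <;> simp only [r_mul_r, r_mul_sr, sr_mul_r, sr_mul_sr] <;>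
    congr 1 <;> ring

@[simp] lemma affineAut_r (k : (ZMod n)ˣ) (m i : ZMod n) :
    affineAut k m (r i) = r ((k : ZMod n) * i) := rfl

@[simp] lemma affineAut_sr (k : (ZMod n)ˣ) (m i : ZMod n) :
    affineAut k m (sr i) = sr ((k : ZMod n) * i + m) := rfl

lemma orderOf_r_dvd (i : ZMod n) : orderOf (r i) ∣ n :=
  orderOf_dvd_of_pow_eq_one (by rw [r_pow, ZMod.natCast_self, mul_zero, r_zero])

lemma orderOf_r_eq_addOrderOf [NeZero n] (i : ZMod n) : orderOf (r i) = addOrderOf i := by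
  rw [orderOf_r, ← ZMod.natCast_zmod_val i, ZMod.addOrderOf_coe _ (NeZero.ne n),
    ZMod.natCast_zmod_val]

lemma orderOf_eq_two_iff (hn : Odd n) {x : DihedralGroup n} : orderOf x = 2 ↔ ∃ j, x = sr j := by
  refine ⟨fun h => ?_, fun ⟨j, hj⟩ => hj ▸ orderOf_sr j⟩
  rcases x with i | j
  · exact absurd (h ▸ orderOf_r_dvd i) hn.not_two_dvd_nat
  · exact ⟨j, rfl⟩

def rotationIndices (H : Subgroup (DihedralGroup n)) : AddSubgroup (ZMod n) where
  carrier := {i | r i ∈ H}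
  zero_mem' := H.one_mem
  add_mem' hi hj := by simpa only [Set.mem_ofPred_eq, ← r_mul_r] using H.mul_mem hi hj
  neg_mem' hi := by simpa only [Set.mem_ofPred_eq, ← inv_r] using H.inv_mem hi

variable {H K : Subgroup (DihedralGroup n)}

lemma exists_map_sr_eq_sr (hn : Odd n) (φ : H ≃* K) {j : ZMod n} (hj : sr j ∈ H) :
    ∃ l, (φ ⟨sr j, hj⟩ : DihedralGroup n) = sr l :=
  (orderOf_eq_two_iff hn).1 (by rw [φ.orderOf_coe_apply, orderOf_sr])

lemma exists_map_r_eq_r (hn : Odd n) (φ : H ≃* K) {i : ZMod n} (hi : r i ∈ H) :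
    ∃ l, (φ ⟨r i, hi⟩ : DihedralGroup n) = r l := by
  rcases h : (φ ⟨r i, hi⟩ : DihedralGroup n) with l | l
  · exact ⟨l, rfl⟩
  · have hi2 : orderOf (r i) = 2 :=
      (φ.orderOf_coe_apply ⟨r i, hi⟩).symm.trans (by rw [h, orderOf_sr])
    obtain ⟨j, hj⟩ := (orderOf_eq_two_iff hn).1 hi2
    nomatch hj

lemma exists_unit_map_r (hn : Odd n) (φ : H ≃* K) :
    ∃ k : (ZMod n)ˣ, ∀ i (hi : r i ∈ H),
      (φ ⟨r i, hi⟩ : DihedralGroup n) = r ((k : ZMod n) * i) := by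
  have : NeZero n := ⟨hn.pos.ne'⟩
  obtain ⟨⟨g, hgH⟩, hg⟩ := IsAddCyclic.exists_generator (α := rotationIndices H)
  obtain ⟨l, hl⟩ := exists_map_r_eq_r hn φ hgH
  have hord : addOrderOf g = addOrderOf l := by
    rw [← orderOf_r_eq_addOrderOf, ← orderOf_r_eq_addOrderOf, ← hl, φ.orderOf_coe_apply]
  obtain ⟨k, hk⟩ := ZMod.exists_unit_mul_eq_of_addOrderOf_eq hord
  refine ⟨k, fun i hi => ?_⟩
  obtain ⟨t, ht⟩ := AddSubgroup.mem_zmultiples_iff.1 (hg ⟨i, hi⟩)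
  have hi' : i = g * t := by simpa [zsmul_eq_mul, mul_comm] using (congrArg Subtype.val ht).symm
  have hpow : (⟨r i, hi⟩ : H) = ⟨r g, hgH⟩ ^ t := Subtype.ext (by simp [hi', r_zpow])
  rw [hpow, map_zpow, SubgroupClass.coe_zpow, hl, r_zpow, hi', ← hk, mul_assoc]

lemma exists_affineAut_extends (φ : H ≃* K) (k : (ZMod n)ˣ)
    (hr : ∀ i (hi : r i ∈ H), (φ ⟨r i, hi⟩ : DihedralGroup n) = r ((k : ZMod n) * i))
    (hsr : ∀ j (hj : sr j ∈ H), ∃ l, (φ ⟨sr j, hj⟩ : DihedralGroup n) = sr l) :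
    ∃ m, ∀ h : H, affineAut k m h = φ h := by
  by_cases hrefl : ∃ j, sr j ∈ H
  · obtain ⟨j, hj⟩ := hrefl
    obtain ⟨l, hl⟩ := hsr j hj
    refine ⟨l - k * j, ?_⟩
    rintro ⟨i | i, hx⟩
    · exact (hr i hx).symm
    · have hji : r (i - j) ∈ H := by simpa only [sr_mul_sr] using H.mul_mem hj hx
      have hsplit : (⟨sr i, hx⟩ : H) = ⟨sr j, hj⟩ * ⟨r (i - j), hji⟩ :=
        Subtype.ext (by rw [Subgroup.coe_mul, sr_mul_r, add_sub_cancel])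
      change affineAut k _ (sr i) = _
      rw [affineAut_sr, hsplit, map_mul, Subgroup.coe_mul, hl, hr _ hji, sr_mul_r]
      congr 1
      ring
  · refine ⟨0, ?_⟩
    rintro ⟨i | i, hx⟩
    · exact (hr i hx).symm
    · exact absurd ⟨i, hx⟩ hrefl

end DihedralGroup

theorem stmt1_general (n : ℕ) (hodd : Odd n)
    (H K : Subgroup (DihedralGroup n)) (phi : H ≃* K) :
    ∃ α : DihedralGroup n ≃* DihedralGroup n,
      ∀ h : H, α (h : DihedralGroup n) = ((phi h : K) : DihedralGroup n) := by
  obtain ⟨k, hk⟩ := DihedralGroup.exists_unit_map_r hodd phi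
  obtain ⟨m, hm⟩ := DihedralGroup.exists_affineAut_extends phi k hk fun _ hj =>
    DihedralGroup.exists_map_sr_eq_sr hodd phi hj
  exact ⟨DihedralGroup.affineAut k m, hm⟩

/-- For odd `n`, the dihedral group `D_{2n}` is homogeneous: every
isomorphism between two subgroups extends to an automorphism of the whole group. -/
theorem stmt1 (n : ℕ) (hpos : 0 < n) (hodd : Odd n)
    (H K : Subgroup (DihedralGroup n)) (phi : H ≃* K) :
    ∃ α : DihedralGroup n ≃* DihedralGroup n,
      ∀ h : H, α (h : DihedralGroup n) = ((phi h : K) : DihedralGroup n) :=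
  stmt1_general n hodd H K phi
end

section
/- Let n = q^r with q prime and r ≥ 2, and suppose D_{2n} has the m-DCI property for some 1 ≤ m ≤ n−1. Then q is odd and m ≤ q. -/
/-!
Every automorphism of `D_{2n}` (`n ≥ 3`) acts on rotations as `r x ↦ r (u * x)` for a unit `u`,
so it maps reflections to reflections. In both cases below `π` is reduction modulo a divisor of
`n`, and we exhibit connection sets `S`, `T` of size `m` whose Cayley digraphs are isomorphic
although no automorphism maps `S` to `T`.

`q = 2`: for an even `M ∣ n` with `n / M ≤ m < 2 n / M` and `π : ZMod n → ZMod M`, let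
`S = r(W) ∪ sr(ker π)` with `W ⊆ ker π \ {0}` and `T = r(π⁻¹{M/2} ∪ W)`. Arcs of `Cay(S)` stay
inside the blocks `r(F) ∪ sr(F)`, `F` a fibre of `π`; arcs of `Cay(T)` stay inside
`r(F) ∪ r(F')` and `sr(F) ∪ sr(F')`, where `F' = F + M/2`. Sending the block of each fibre over
the lower half of `ZMod M` to rotations and the block of each fibre over the upper half to
reflections, reversing one side of every block, is an isomorphism. But `S` contains a reflection
and `T` does not.

`q` odd, `m > q`: let `π : ZMod n → ZMod h` with `h = q^(r-1)`, so that `n ∣ h²`. Let the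
rotations of `S` and `T` be `r(π⁻¹{1} ∪ {h})` and `r(π⁻¹{1} ∪ {2h})`, and fill up with
reflections `sr(π⁻¹ Y ∪ A)`, `sr(π⁻¹ Y ∪ 2A)`, `A ⊆ ker π`. Scaling every fibre of `π` by `2`
about a base point is an isomorphism. If `r x ↦ r (u * x)` mapped `S` to `T`, then `r 1 ∈ S`
would force `u ≡ 1 mod h`, hence `u * h = h` as `n ∣ h²`; yet `r h ∈ S` and `r h ∉ T`.
-/

namespace DihedralGroup

variable {n : ℕ}

def ofIndexSets (A B : Set (ZMod n)) : Set (DihedralGroup n) := r '' A ∪ sr '' B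

@[simp]
lemma r_mem_ofIndexSets {A B : Set (ZMod n)} {a : ZMod n} : r a ∈ ofIndexSets A B ↔ a ∈ A := by
  simp [ofIndexSets]

@[simp]
lemma sr_mem_ofIndexSets {A B : Set (ZMod n)} {a : ZMod n} : sr a ∈ ofIndexSets A B ↔ a ∈ B := by
  simp [ofIndexSets]

lemma one_notMem_ofIndexSets {A B : Set (ZMod n)} (hA : 0 ∉ A) : 1 ∉ ofIndexSets A B := by
  rwa [one_def, r_mem_ofIndexSets]

lemma ncard_ofIndexSets [NeZero n] (A B : Set (ZMod n)) :
    (ofIndexSets A B).ncard = A.ncard + B.ncard := by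
  rw [ofIndexSets, Set.ncard_union_eq, Set.ncard_image_of_injective _ fun _ _ => r.inj,
    Set.ncard_image_of_injective _ fun _ _ => sr.inj]
  rw [Set.disjoint_left]
  rintro _ ⟨a, -, rfl⟩ ⟨b, -, hb⟩
  cases hb

@[simp]
lemma cayRel_r_r (S : Set (DihedralGroup n)) (a b : ZMod n) :
    cayRel S (r a) (r b) ↔ r (b - a) ∈ S := by
  simp [cayRel, sub_eq_add_neg]

@[simp]
lemma cayRel_r_sr (S : Set (DihedralGroup n)) (a b : ZMod n) :
    cayRel S (r a) (sr b) ↔ sr (b - a) ∈ S := by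
  simp [cayRel, sub_eq_add_neg]

@[simp]
lemma cayRel_sr_r (S : Set (DihedralGroup n)) (a b : ZMod n) :
    cayRel S (sr a) (r b) ↔ sr (a - b) ∈ S := by
  simp [cayRel]

@[simp]
lemma cayRel_sr_sr (S : Set (DihedralGroup n)) (a b : ZMod n) :
    cayRel S (sr a) (sr b) ↔ r (a - b) ∈ S := by
  simp [cayRel]

lemma exists_mulEquiv_apply_r_one_eq (hn : 3 ≤ n) (α : DihedralGroup n ≃* DihedralGroup n) :
    ∃ u, α (r 1) = r u := by
  rcases hα : α (r 1) with u | a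
  · exact ⟨u, rfl⟩
  · have : r (1 + 1) = (1 : DihedralGroup n) :=
      α.injective (by rw [← r_mul_r, map_mul, hα, sr_mul_self, map_one])
    rw [one_def, r.injEq, one_add_one_eq_two, ← Nat.cast_ofNat, ZMod.natCast_eq_zero_iff] at this
    have := Nat.le_of_dvd two_pos this
    omega

lemma exists_isUnit_mulEquiv_apply_r (hn : 3 ≤ n) (α : DihedralGroup n ≃* DihedralGroup n) :
    ∃ u : ZMod n, IsUnit u ∧ ∀ x, α (r x) = r (u * x) := by
  have : NeZero n := ⟨by omega⟩
  have map_r {β : DihedralGroup n ≃* DihedralGroup n} {u : ZMod n} (hu : β (r 1) = r u) (x) :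
      β (r x) = r (u * x) := by
    rw [← ZMod.natCast_zmod_val x, ← r_one_pow, map_pow, hu, r_pow, mul_comm]
  obtain ⟨u, hu⟩ := exists_mulEquiv_apply_r_one_eq hn α
  obtain ⟨v, hv⟩ := exists_mulEquiv_apply_r_one_eq hn α.symm
  refine ⟨u, IsUnit.of_mul_eq_one v ?_, map_r hu⟩
  simpa [map_r hu, eq_comm] using congrArg α hv

lemma mulEquiv_apply_sr_ne_r (hn : 3 ≤ n) (α : DihedralGroup n ≃* DihedralGroup n)
    (a y : ZMod n) : α (sr a) ≠ r y := by
  intro h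
  obtain ⟨v, -, hv⟩ := exists_isUnit_mulEquiv_apply_r hn α.symm
  simpa [hv] using congrArg α.symm h

def mapIndex (f : ZMod n → ZMod n) : DihedralGroup n → DihedralGroup n
  | r a => r (f a)
  | sr a => sr (f a)

lemma mapIndex_injective {f : ZMod n → ZMod n} (hf : Function.Injective f) :
    Function.Injective (mapIndex f) := by
  rintro (a | a) (b | b) hab <;> simp only [mapIndex, r.injEq, sr.injEq, reduceCtorEq] at hab
  all_goals rw [hf hab]

lemma cayRel_ofIndexSets_mapIndex_iff {f : ZMod n → ZMod n} {A B A' B' : Set (ZMod n)}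
    (hA : ∀ a b, f b - f a ∈ A' ↔ b - a ∈ A) (hB : ∀ a b, f b - f a ∈ B' ↔ b - a ∈ B)
    (x y : DihedralGroup n) :
    cayRel (ofIndexSets A' B') (mapIndex f x) (mapIndex f y) ↔ cayRel (ofIndexSets A B) x y := by
  cases x <;> cases y <;> simp [mapIndex, hA, hB]

end DihedralGroup

lemma nonempty_relIso_cayRel_of_bijective {G : Type*} [Group G] {S T : Set G} {f : G → G}
    (hf : Function.Bijective f) (hST : ∀ x y, cayRel T (f x) (f y) ↔ cayRel S x y) :
    Nonempty (cayRel S ≃r cayRel T) :=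
  ⟨⟨Equiv.ofBijective f hf, hST _ _⟩⟩

namespace ZMod

variable {n h : ℕ} (hdvd : h ∣ n)

@[simp]
lemma castHom_natCast_val [NeZero h] (w : ZMod h) :
    castHom hdvd (ZMod h) (w.val : ZMod n) = w := by
  simp

lemma ncard_preimage_castHom_eq_mul [NeZero h] (X : Set (ZMod h)) :
    (castHom hdvd (ZMod h) ⁻¹' X).ncard =
      X.ncard * (castHom hdvd (ZMod h) ⁻¹' {0}).ncard := by
  set π := castHom hdvd (ZMod h)
  let e : π ⁻¹' X ≃ X × π ⁻¹' {0} :=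
    { toFun z := (⟨π z, z.2⟩, ⟨z - (π z).val, by simp⟩)
      invFun p := ⟨(p.1.1.val : ZMod n) + p.2, by simp [show π p.2 = 0 from p.2.2]⟩
      left_inv z := by simp
      right_inv p := by ext <;> simp [show π p.2 = 0 from p.2.2] }
  simp_rw [← Nat.card_coe_set_eq, Nat.card_congr e, Nat.card_prod]

lemma ncard_preimage_castHom [NeZero n] (X : Set (ZMod h)) :
    (castHom hdvd (ZMod h) ⁻¹' X).ncard = X.ncard * (n / h) := by
  have : NeZero h := ⟨fun h0 => NeZero.ne n (Nat.eq_zero_of_zero_dvd (h0 ▸ hdvd))⟩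
  have hcard := ncard_preimage_castHom_eq_mul hdvd (Set.univ : Set (ZMod h))
  rw [Set.preimage_univ, Set.ncard_univ, Set.ncard_univ, Nat.card_zmod, Nat.card_zmod] at hcard
  rw [ncard_preimage_castHom_eq_mul,
    Nat.div_eq_of_eq_mul_left (NeZero.pos h) (hcard.trans (mul_comm _ _))]

lemma ncard_preimage_castHom_union [NeZero n] {X : Set (ZMod h)} (hX : 0 ∉ X) {A : Set (ZMod n)}
    (hA : ∀ a ∈ A, castHom hdvd (ZMod h) a = 0) :
    (castHom hdvd (ZMod h) ⁻¹' X ∪ A).ncard = X.ncard * (n / h) + A.ncard := by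
  rw [Set.ncard_union_eq, ncard_preimage_castHom]
  exact Set.disjoint_left.mpr fun a ha ha' => hX (hA a ha' ▸ ha)

lemma exists_ncard_preimage_castHom_union_eq [NeZero n] {k : ℕ} (hk : k < n) :
    ∃ X : Set (ZMod h), ∃ A : Set (ZMod n), (∀ a ∈ A, castHom hdvd (ZMod h) a = 0) ∧
      (castHom hdvd (ZMod h) ⁻¹' X ∪ A).ncard = k := by
  have : NeZero h := ⟨fun h0 => NeZero.ne n (Nat.eq_zero_of_zero_dvd (h0 ▸ hdvd))⟩
  have hq : 0 < n / h := Nat.div_pos (Nat.le_of_dvd (NeZero.pos n) hdvd) (NeZero.pos h)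
  obtain ⟨X, hX, hXcard⟩ : ∃ X ⊆ ({0}ᶜ : Set (ZMod h)), X.ncard = k / (n / h) := by
    refine Set.exists_subset_card_eq ?_
    rw [Set.ncard_compl, Set.ncard_singleton, Nat.card_zmod, Nat.le_sub_one_iff_lt (NeZero.pos h),
      Nat.div_lt_iff_lt_mul hq, Nat.mul_div_cancel' hdvd]
    exact hk
  obtain ⟨A, hA, hAcard⟩ : ∃ A ⊆ castHom hdvd (ZMod h) ⁻¹' {0}, A.ncard = k % (n / h) := by
    refine Set.exists_subset_card_eq ?_
    rw [ncard_preimage_castHom, Set.ncard_singleton, one_mul]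
    exact (Nat.mod_lt _ hq).le
  refine ⟨X, A, hA, ?_⟩
  rw [ncard_preimage_castHom_union hdvd (fun h0 => hX h0 rfl) hA, hXcard, hAcard,
    Nat.div_add_mod']

/-- On the fibre of `π` over `w`, with base point `w.val`, this is `w.val + k ↦ w.val + c * k`. -/
def scaleFibers (c z : ZMod n) : ZMod n :=
  (castHom hdvd (ZMod h) z).val + c * (z - (castHom hdvd (ZMod h) z).val)

variable {hdvd}

lemma scaleFibers_sub_scaleFibers {c a b : ZMod n}
    (hab : castHom hdvd (ZMod h) a = castHom hdvd (ZMod h) b) :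
    scaleFibers hdvd c b - scaleFibers hdvd c a = c * (b - a) := by
  rw [scaleFibers, scaleFibers, hab]
  ring

lemma castHom_scaleFibers [NeZero h] (c z : ZMod n) :
    castHom hdvd (ZMod h) (scaleFibers hdvd c z) = castHom hdvd (ZMod h) z := by
  simp only [scaleFibers, map_add, map_mul, map_sub, castHom_natCast_val, sub_self, mul_zero,
    add_zero]

lemma scaleFibers_injective [NeZero h] {c : ZMod n} (hc : IsUnit c) :
    Function.Injective (scaleFibers hdvd c) := by
  intro a b hab
  have hπ : castHom hdvd (ZMod h) a = castHom hdvd (ZMod h) b := by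
    simpa only [castHom_scaleFibers] using congrArg (castHom hdvd (ZMod h)) hab
  have := scaleFibers_sub_scaleFibers (c := c) hπ
  rw [hab, sub_self, eq_comm, hc.mul_right_eq_zero, sub_eq_zero] at this
  exact this.symm

lemma scaleFibers_sub_mem_iff [NeZero h] {c : ZMod n} (hc : IsUnit c) (X : Set (ZMod h))
    {A : Set (ZMod n)} (hA : ∀ a ∈ A, castHom hdvd (ZMod h) a = 0) (a b : ZMod n) :
    scaleFibers hdvd c b - scaleFibers hdvd c a ∈ castHom hdvd (ZMod h) ⁻¹' X ∪ (c * ·) '' A ↔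
      b - a ∈ castHom hdvd (ZMod h) ⁻¹' X ∪ A := by
  by_cases hab : castHom hdvd (ZMod h) a = castHom hdvd (ZMod h) b
  · have h0 : castHom hdvd (ZMod h) (b - a) = 0 := by rw [map_sub, hab, sub_self]
    rw [scaleFibers_sub_scaleFibers hab, Set.mem_union, Set.mem_union, Set.mem_preimage,
      Set.mem_preimage, map_mul, h0, mul_zero, hc.mul_right_injective.mem_set_image]
  · have h0 : castHom hdvd (ZMod h) (b - a) ≠ 0 := by rwa [map_sub, sub_ne_zero, ne_comm]
    have hπ : castHom hdvd (ZMod h) (scaleFibers hdvd c b - scaleFibers hdvd c a) =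
        castHom hdvd (ZMod h) (b - a) := by
      simp only [map_sub, castHom_scaleFibers]
    rw [Set.mem_union, Set.mem_union, Set.mem_preimage, Set.mem_preimage, hπ]
    refine or_congr_right (iff_of_false ?_ fun hba => h0 (hA _ hba))
    rintro ⟨x, hx, hxe⟩
    rw [← hπ, ← hxe, map_mul, hA x hx, mul_zero] at h0
    exact h0 rfl

open DihedralGroup in
theorem nonempty_relIso_cayRel_scaleFibers [NeZero n] [NeZero h] {c : ZMod n} (hc : IsUnit c)
    (X Y : Set (ZMod h)) {A B : Set (ZMod n)} (hA : ∀ a ∈ A, castHom hdvd (ZMod h) a = 0)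
    (hB : ∀ b ∈ B, castHom hdvd (ZMod h) b = 0) :
    Nonempty (cayRel (ofIndexSets (castHom hdvd (ZMod h) ⁻¹' X ∪ A)
        (castHom hdvd (ZMod h) ⁻¹' Y ∪ B)) ≃r
      cayRel (ofIndexSets (castHom hdvd (ZMod h) ⁻¹' X ∪ (c * ·) '' A)
        (castHom hdvd (ZMod h) ⁻¹' Y ∪ (c * ·) '' B))) :=
  nonempty_relIso_cayRel_of_bijective
    (Finite.injective_iff_bijective.mp (mapIndex_injective (scaleFibers_injective hc)))
    (cayRel_ofIndexSets_mapIndex_iff (scaleFibers_sub_mem_iff hc X hA)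
      (scaleFibers_sub_mem_iff hc Y hB))

lemma mul_natCast_eq_zero_of_castHom_eq_zero [NeZero n] (hsq : n ∣ h * h) {a : ZMod n}
    (ha : castHom hdvd (ZMod h) a = 0) : a * h = 0 := by
  rw [castHom_apply, cast_eq_val, natCast_eq_zero_iff] at ha
  obtain ⟨t, ht⟩ := ha
  rw [← natCast_zmod_val a, ht, ← Nat.cast_mul, natCast_eq_zero_iff]
  exact hsq.trans ⟨t, by ring⟩

end ZMod

open DihedralGroup

theorem mulEquiv_image_ofIndexSets_ne {n h : ℕ} {hdvd : h ∣ n} (hsq : n ∣ h * h) (hh2 : 2 ≤ h)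
    (hh : h < n) (α : DihedralGroup n ≃* DihedralGroup n) (B B' : Set (ZMod n)) :
    α '' ofIndexSets (ZMod.castHom hdvd (ZMod h) ⁻¹' {1} ∪ {(h : ZMod n)}) B ≠
      ofIndexSets (ZMod.castHom hdvd (ZMod h) ⁻¹' {1} ∪ (2 * ·) '' {(h : ZMod n)}) B' := by
  have : Fact (1 < h) := ⟨hh2⟩
  have : NeZero n := ⟨by omega⟩
  set π := ZMod.castHom hdvd (ZMod h)
  have hπh : π h = 0 := by rw [map_natCast, ZMod.natCast_self]
  intro hα
  obtain ⟨u, hu, hαr⟩ := exists_isUnit_mulEquiv_apply_r (by omega) α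
  have hmem (x : ZMod n) (hx : x ∈ π ⁻¹' {1} ∪ {(h : ZMod n)}) :
      u * x ∈ π ⁻¹' {1} ∪ (2 * ·) '' {(h : ZMod n)} := by
    rw [← r_mem_ofIndexSets, ← hα, ← hαr]
    exact Set.mem_image_of_mem α (r_mem_ofIndexSets.mpr hx)
  have hu1 : π u = 1 := by
    rcases hmem 1 (Or.inl (map_one π)) with hu1 | hu2
    · simpa using hu1
    · rw [mul_one, Set.image_singleton] at hu2
      have := hu.map π
      rw [Set.mem_singleton_iff.mp hu2, map_mul, hπh, mul_zero] at this
      exact absurd this not_isUnit_zero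
  have hfix : u * h = h := by
    rw [← sub_eq_zero, ← sub_one_mul]
    exact ZMod.mul_natCast_eq_zero_of_castHom_eq_zero hsq (by rw [map_sub, hu1, map_one, sub_self])
  rcases hmem h (Or.inr rfl) with h1 | h2
  · rw [hfix, Set.mem_preimage, hπh, Set.mem_singleton_iff] at h1
    exact zero_ne_one h1
  · rw [hfix, Set.image_singleton, Set.mem_singleton_iff, two_mul, left_eq_add,
      ZMod.natCast_eq_zero_iff] at h2
    exact absurd (Nat.le_of_dvd (by omega) h2) (by omega)

theorem not_hasDCI_of_dvd_of_dvd_mul_self {n h m : ℕ} (hdvd : h ∣ n) (hsq : n ∣ h * h)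
    (hn : Odd n) (hh : h < n) (hm : n / h < m) (hm' : m < n) :
    ¬ HasDCI (DihedralGroup n) m := by
  have : NeZero n := ⟨hn.pos.ne'⟩
  have : NeZero h := ⟨by rintro rfl; simp at hdvd; omega⟩
  have hh2 : 2 ≤ h := by
    by_contra! h1
    obtain rfl : h = 1 := by have := NeZero.pos h; omega
    have := Nat.le_of_dvd one_pos hsq
    omega
  have : Fact (1 < h) := ⟨hh2⟩
  set π := ZMod.castHom hdvd (ZMod h)
  have hπh : ∀ a ∈ ({(h : ZMod n)} : Set (ZMod n)), π a = 0 := by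
    rintro _ rfl
    rw [map_natCast, ZMod.natCast_self]
  have hh0 : (h : ZMod n) ≠ 0 := by
    rw [Ne, ZMod.natCast_eq_zero_iff]
    exact fun hn' => (Nat.le_of_dvd (NeZero.pos h) hn').not_gt hh
  have h2 : IsUnit (2 : ZMod n) := by
    rw [← Nat.cast_ofNat, ZMod.isUnit_iff_coprime, Nat.coprime_two_left]
    exact hn
  obtain ⟨Y, A, hA, hcardYA⟩ :=
    ZMod.exists_ncard_preimage_castHom_union_eq hdvd (k := m - n / h - 1)
      (((Nat.sub_le _ _).trans (Nat.sub_le _ _)).trans_lt hm')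
  have h1S : (1 : DihedralGroup n) ∉ ofIndexSets (π ⁻¹' {1} ∪ {(h : ZMod n)}) (π ⁻¹' Y ∪ A) := by
    apply one_notMem_ofIndexSets
    simp [eq_comm, hh0]
  have h1T : (1 : DihedralGroup n) ∉
      ofIndexSets (π ⁻¹' {1} ∪ (2 * ·) '' {(h : ZMod n)}) (π ⁻¹' Y ∪ (2 * ·) '' A) := by
    apply one_notMem_ofIndexSets
    have : (0 : ZMod n) ≠ 2 * h := fun h0 => hh0 (h2.mul_right_eq_zero.mp h0.symm)
    simp [this]
  have hcard : (ofIndexSets (π ⁻¹' {1} ∪ {(h : ZMod n)}) (π ⁻¹' Y ∪ A)).ncard = m := by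
    rw [ncard_ofIndexSets, ZMod.ncard_preimage_castHom_union hdvd (by simp) hπh, hcardYA,
      Set.ncard_singleton, Set.ncard_singleton]
    omega
  intro hdci
  obtain ⟨α, hα⟩ := hdci _ h1S hcard _ h1T
    (ZMod.nonempty_relIso_cayRel_scaleFibers h2 {1} Y hπh hA)
  exact mulEquiv_image_ofIndexSets_ne hsq hh2 hh α _ _ hα

namespace ZMod

variable {n M : ℕ} (hdvd : M ∣ n)

lemma val_add_half_lt_iff [NeZero M] (hM : Even M) (w : ZMod M) :
    (w + (M / 2 : ℕ)).val < M / 2 ↔ ¬ w.val < M / 2 := by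
  obtain ⟨k, rfl⟩ := hM
  have hk : (k + k) / 2 = k := by omega
  have hw := w.val_lt
  rw [hk, val_add, val_natCast, Nat.mod_eq_of_lt (show k < k + k by omega)]
  by_cases hwk : w.val < k
  · rw [Nat.mod_eq_of_lt (by omega)]; omega
  · rw [Nat.mod_eq_sub_mod (by omega), Nat.mod_eq_of_lt (by omega)]; omega

lemma half_add_half (hM : Even M) : ((M / 2 : ℕ) : ZMod M) + (M / 2 : ℕ) = 0 := by
  rw [← Nat.cast_add, ← two_mul, Nat.mul_div_cancel' (even_iff_two_dvd.mp hM), natCast_self]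

/-- Maps the fibre of `π` over `w` onto the fibre over `w + M / 2`, reversing it. -/
def fiberFlip (a : ZMod n) : ZMod n :=
  (castHom hdvd (ZMod M) a).val + (castHom hdvd (ZMod M) a + (M / 2 : ℕ)).val - a

variable {hdvd}

lemma castHom_fiberFlip [NeZero M] (a : ZMod n) :
    castHom hdvd (ZMod M) (fiberFlip hdvd a) = castHom hdvd (ZMod M) a + (M / 2 : ℕ) := by
  simp only [fiberFlip, map_add, map_sub, castHom_natCast_val]
  ring

lemma fiberFlip_fiberFlip [NeZero M] (hM : Even M) (a : ZMod n) :
    fiberFlip hdvd (fiberFlip hdvd a) = a := by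
  rw [fiberFlip, castHom_fiberFlip, add_assoc, half_add_half hM, add_zero, fiberFlip]
  ring

lemma fiberFlip_sub_fiberFlip {a b : ZMod n}
    (hab : castHom hdvd (ZMod M) a = castHom hdvd (ZMod M) b) :
    fiberFlip hdvd a - fiberFlip hdvd b = b - a := by
  rw [fiberFlip, fiberFlip, hab]
  ring

lemma fiberFlip_sub_mem_iff [NeZero M] {W : Set (ZMod n)}
    (hW : ∀ w ∈ W, castHom hdvd (ZMod M) w = 0) (a b : ZMod n) :
    fiberFlip hdvd a - fiberFlip hdvd b ∈ W ↔ b - a ∈ W := by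
  by_cases hab : castHom hdvd (ZMod M) a = castHom hdvd (ZMod M) b
  · rw [fiberFlip_sub_fiberFlip hab]
  · have h1 : castHom hdvd (ZMod M) (b - a) ≠ 0 := by rwa [map_sub, sub_ne_zero, ne_comm]
    have h2 : castHom hdvd (ZMod M) (fiberFlip hdvd a - fiberFlip hdvd b) ≠ 0 := by
      rwa [map_sub, castHom_fiberFlip, castHom_fiberFlip, add_sub_add_right_eq_sub, sub_ne_zero]
    exact iff_of_false (fun h => h2 (hW _ h)) (fun h => h1 (hW _ h))

end ZMod

namespace DihedralGroup

open ZMod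

variable {n M : ℕ} (hdvd : M ∣ n)

def InLowerHalf (a : ZMod n) : Prop := (castHom hdvd (ZMod M) a).val < M / 2

instance : DecidablePred (InLowerHalf hdvd) := fun _ => Nat.decLt _ _

def halfSwap : DihedralGroup n → DihedralGroup n
  | r a => if InLowerHalf hdvd a then r a else sr (fiberFlip hdvd a)
  | sr a => if InLowerHalf hdvd a then r (fiberFlip hdvd a) else sr a

variable {hdvd}

lemma inLowerHalf_congr {a b : ZMod n}
    (hab : castHom hdvd (ZMod M) a = castHom hdvd (ZMod M) b) :
    InLowerHalf hdvd a ↔ InLowerHalf hdvd b := by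
  rw [InLowerHalf, InLowerHalf, hab]

variable [NeZero M]

lemma inLowerHalf_fiberFlip (hM : Even M) (a : ZMod n) :
    InLowerHalf hdvd (fiberFlip hdvd a) ↔ ¬ InLowerHalf hdvd a := by
  rw [InLowerHalf, InLowerHalf, castHom_fiberFlip, val_add_half_lt_iff hM]

lemma castHom_sub_ne_half (hM : Even M) {a b : ZMod n}
    (hab : InLowerHalf hdvd a ↔ InLowerHalf hdvd b) :
    castHom hdvd (ZMod M) b - castHom hdvd (ZMod M) a ≠ (M / 2 : ℕ) := by
  intro h
  rw [sub_eq_iff_eq_add'] at h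
  rw [InLowerHalf, InLowerHalf, h, val_add_half_lt_iff hM] at hab
  exact iff_not_self hab

lemma halfSwap_involutive (hM : Even M) : Function.Involutive (halfSwap hdvd) := by
  rintro (a | a) <;> by_cases ha : InLowerHalf hdvd a <;>
    simp [halfSwap, ha, inLowerHalf_fiberFlip hM, fiberFlip_fiberFlip hM]

lemma cayRel_halfSwap_iff (hM : Even M) {W : Set (ZMod n)}
    (hW : ∀ w ∈ W, castHom hdvd (ZMod M) w = 0) (x y : DihedralGroup n) :
    cayRel (ofIndexSets (castHom hdvd (ZMod M) ⁻¹' {((M / 2 : ℕ) : ZMod M)} ∪ W) ∅)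
        (halfSwap hdvd x) (halfSwap hdvd y) ↔
      cayRel (ofIndexSets W (castHom hdvd (ZMod M) ⁻¹' {0})) x y := by
  rcases x with a | a <;> rcases y with b | b <;>
    by_cases ha : InLowerHalf hdvd a <;> by_cases hb : InLowerHalf hdvd b <;>
    simp only [halfSwap, ha, hb, if_true, if_false, cayRel_r_r, cayRel_r_sr, cayRel_sr_r,
      cayRel_sr_sr, r_mem_ofIndexSets, sr_mem_ofIndexSets, Set.mem_union, Set.mem_preimage,
      Set.mem_singleton_iff, Set.mem_empty_iff_false, map_sub, castHom_fiberFlip]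
  -- Both digraphs only have arcs between fibres over the same half of `ZMod M`.
  all_goals grind [inLowerHalf_congr, castHom_sub_ne_half, castHom_fiberFlip,
    fiberFlip_sub_mem_iff, half_add_half]

end DihedralGroup

theorem not_hasDCI_of_even_dvd {n M m : ℕ} (hdvd : M ∣ n) (hM : Even M) (hn : 3 ≤ n)
    (hm : n / M ≤ m) (hm' : m < 2 * (n / M)) : ¬ HasDCI (DihedralGroup n) m := by
  have : NeZero n := ⟨by omega⟩
  have : NeZero M := ⟨by rintro rfl; simp at hdvd; omega⟩
  set π := ZMod.castHom hdvd (ZMod M)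
  have hK : (π ⁻¹' {0}).ncard = n / M := by
    rw [ZMod.ncard_preimage_castHom, Set.ncard_singleton, one_mul]
  obtain ⟨W, hWK, hWcard⟩ : ∃ W ⊆ π ⁻¹' {0} \ {0}, W.ncard = m - n / M := by
    refine Set.exists_subset_card_eq ?_
    rw [Set.ncard_sdiff_singleton_of_mem (by simp), hK]
    omega
  have hW0 : (0 : ZMod n) ∉ W := fun h => (hWK h).2 rfl
  have hW : ∀ w ∈ W, π w = 0 := fun w hw => (hWK hw).1
  have hhalf : ((M / 2 : ℕ) : ZMod M) ≠ 0 := by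
    rw [Ne, ZMod.natCast_eq_zero_iff]
    exact Nat.not_dvd_of_pos_of_lt (by have := NeZero.pos M; obtain ⟨k, rfl⟩ := hM; omega)
      (Nat.div_lt_self (NeZero.pos M) one_lt_two)
  have h1S : (1 : DihedralGroup n) ∉ ofIndexSets W (π ⁻¹' {0}) := one_notMem_ofIndexSets hW0
  have h1T : (1 : DihedralGroup n) ∉ ofIndexSets (π ⁻¹' {((M / 2 : ℕ) : ZMod M)} ∪ W) ∅ := by
    apply one_notMem_ofIndexSets
    simp [hW0, hhalf.symm]
  have hcard : (ofIndexSets W (π ⁻¹' {0})).ncard = m := by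
    rw [ncard_ofIndexSets, hWcard, hK]
    omega
  intro hdci
  obtain ⟨α, hα⟩ := hdci _ h1S hcard _ h1T <| nonempty_relIso_cayRel_of_bijective
    (halfSwap_involutive hM).bijective (cayRel_halfSwap_iff hM hW)
  have hsr : α (sr 0) ∈ ofIndexSets (π ⁻¹' {((M / 2 : ℕ) : ZMod M)} ∪ W) ∅ :=
    hα ▸ Set.mem_image_of_mem α (sr_mem_ofIndexSets.mpr (map_zero π))
  rcases hαsr : α (sr 0) with y | y
  · exact mulEquiv_apply_sr_ne_r hn α 0 y hαsr
  · rw [hαsr, sr_mem_ofIndexSets] at hsr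
    exact hsr

theorem not_hasDCI_two_pow {r m : ℕ} (hr : 2 ≤ r) (hm1 : 1 ≤ m) (hm2 : m < 2 ^ r) :
    ¬ HasDCI (DihedralGroup (2 ^ r)) m := by
  set k := Nat.log 2 m
  have hk : 2 ^ k ≤ m := Nat.pow_log_le_self 2 (by omega)
  have hk' : m < 2 ^ (k + 1) := Nat.lt_pow_succ_log_self one_lt_two m
  have hkr : k < r := (Nat.pow_lt_pow_iff_right one_lt_two).mp (hk.trans_lt hm2)
  have hdiv : 2 ^ r / 2 ^ (r - k) = 2 ^ k := by
    rw [Nat.pow_div (by omega) two_pos, Nat.sub_sub_self hkr.le]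
  refine not_hasDCI_of_even_dvd (pow_dvd_pow 2 (Nat.sub_le r k))
    ((Nat.even_pow' (by omega)).mpr even_two) ?_ (hdiv ▸ hk) (hdiv ▸ by rw [pow_succ] at hk'; omega)
  calc 3 ≤ 2 ^ 2 := by norm_num
    _ ≤ 2 ^ r := Nat.pow_le_pow_right two_pos hr

theorem not_hasDCI_pow_of_odd {q r m : ℕ} (hq : 1 < q) (hodd : Odd q) (hr : 2 ≤ r) (hm : q < m)
    (hm' : m < q ^ r) : ¬ HasDCI (DihedralGroup (q ^ r)) m := by
  have hqr : q ^ r = q ^ (r - 1) * q := by rw [← pow_succ, Nat.sub_add_cancel (by omega)]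
  refine not_hasDCI_of_dvd_of_dvd_mul_self (pow_dvd_pow q (Nat.sub_le r 1)) ?_ hodd.pow ?_ ?_ hm'
  · rw [← pow_add]
    exact pow_dvd_pow q (by omega)
  · exact Nat.pow_lt_pow_right hq (by omega)
  · rwa [hqr, Nat.mul_div_cancel_left _ (by positivity)]

/-- For `n = q^r` with `q` prime and `r ≥ 2`, if `D_{2n}` has the
`m`-DCI property for some `1 ≤ m ≤ n - 1`, then `q` is odd and `m ≤ q`. -/
theorem stmt16 (q r m : ℕ) (hq : q.Prime) (hr : 2 ≤ r)
    (hm1 : 1 ≤ m) (hm2 : m ≤ q ^ r - 1)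
    (h : HasDCI (DihedralGroup (q ^ r)) m) :
    Odd q ∧ m ≤ q := by
  have hm : m < q ^ r := by have := pow_pos hq.pos r; omega
  have hodd : Odd q := hq.odd_of_ne_two fun hq2 => not_hasDCI_two_pow hr hm1 (hq2 ▸ hm) (hq2 ▸ h)
  exact ⟨hodd, not_lt.mp fun hqm => not_hasDCI_pow_of_odd hq.one_lt hodd hr hqm hm h⟩
end

section
/- If the dihedral group D_{2n} (n ≥ 2) is a DCI-group, then n = 2 or n is odd and square-free. -/
/-!
For even `n ≥ 4`, the rotation subgroup and the subgroup `{r (2i), sr (2i)}` both have index 2,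
so removing the identity from either gives a Cayley digraph that is a disjoint union of two
complete digraphs on `n` vertices. A Cayley isomorphism between the two would map the cyclic
rotation subgroup onto the other one, which has no element of order `n`.

For odd `n` with `p² ∣ n`, take `S = (1 + pℤₙ) ∪ {p}` and `T = (1 + pℤₙ) ∪ {2p}` among the
rotations. The bijection `x ↦ 2x - ℓ(x mod p)` of `ℤₙ`, with `ℓ` lifting residues to
`0, …, p - 1`, preserves residues mod `p` and doubles differences inside a residue class, so it
is an isomorphism `Cay(ℤₙ, S) ≅ Cay(ℤₙ, T)`, which extends to `D_{2n}`. Every automorphism of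
`D_{2n}` acts on the rotations as multiplication by some `w`, and `wS = T` forces `wp = 2p`,
hence `w ≡ 2 (mod p)`, while `w = w · 1 ∈ T` forces `w ≡ 0` or `1 (mod p)`.
-/

section Subgroup

variable {G : Type*} [Group G]

-- Inversion turns the right cosets `H x` into the left cosets that make up `G ⧸ H`.
lemma cayRel_sdiff_one_iff (H : Subgroup G) (x y : G) :
    cayRel ((H : Set G) \ {1}) x y ↔ x ≠ y ∧ ((x⁻¹ : G) : G ⧸ H) = ((y⁻¹ : G) : G ⧸ H) := by
  rw [cayRel, Set.mem_sdiff, Set.mem_singleton_iff, mul_inv_eq_one, QuotientGroup.eq, inv_inv,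
    ← inv_mem_iff, mul_inv_rev, inv_inv, SetLike.mem_coe, and_comm, ne_comm]

-- Both digraphs are disjoint unions of `H.index` complete digraphs on `Nat.card H` vertices.
lemma nonempty_relIso_cayRel_sdiff_one [Finite G] {H K : Subgroup G}
    (hHK : H.index = K.index) :
    Nonempty (cayRel ((H : Set G) \ {1}) ≃r cayRel ((K : Set G) \ {1})) := by
  have hcard : Nat.card H = Nat.card K := by
    have hH := H.card_mul_index
    have hK := K.card_mul_index
    rw [hHK] at hH
    exact Nat.eq_of_mul_eq_mul_right (Nat.pos_of_ne_zero K.index_ne_zero_of_finite)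
      (hH.trans hK.symm)
  obtain ⟨q⟩ := Finite.card_eq.mp (hHK : Nat.card (G ⧸ H) = Nat.card (G ⧸ K))
  obtain ⟨e⟩ := Finite.card_eq.mp hcard
  let f : G ≃ G := (Equiv.inv G).trans <| H.groupEquivQuotientProdSubgroup.trans <|
    (q.prodCongr e).trans <| K.groupEquivQuotientProdSubgroup.symm.trans (Equiv.inv G)
  have hmk : ∀ p, ((K.groupEquivQuotientProdSubgroup.symm p : G) : G ⧸ K) = p.1 := fun p =>
    congrArg Prod.fst (K.groupEquivQuotientProdSubgroup.apply_symm_apply p)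
  have hf : ∀ x, (((f x)⁻¹ : G) : G ⧸ K) = q ((x⁻¹ : G) : G ⧸ H) := fun x => by
    simp only [f, Equiv.trans_apply, Equiv.inv_apply, inv_inv, hmk, Equiv.prodCongr_apply,
      Prod.map_fst]
    rfl
  refine ⟨⟨f, fun {x y} => ?_⟩⟩
  simp only [cayRel_sdiff_one_iff, hf, ne_eq, f.apply_eq_iff_eq, q.apply_eq_iff_eq]

lemma IsCIDigraph.exists_map_eq [Finite G] {H K : Subgroup G}
    (hH : IsCIDigraph ((H : Set G) \ {1})) (hHK : H.index = K.index) :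
    ∃ α : G ≃* G, H.map α.toMonoidHom = K := by
  obtain ⟨α, hα⟩ := hH _ (by simp) (nonempty_relIso_cayRel_sdiff_one hHK)
  refine ⟨α, SetLike.coe_injective ?_⟩
  rw [Subgroup.coe_map, MulEquiv.coe_toMonoidHom,
    ← Set.sdiff_union_of_subset (Set.singleton_subset_iff.mpr H.one_mem),
    ← Set.sdiff_union_of_subset (Set.singleton_subset_iff.mpr K.one_mem), Set.image_union, hα,
    Set.image_singleton, map_one]

end Subgroup

lemma MonoidHom.index_ker_eq_two {G : Type*} [Group G] (f : G →* Multiplicative (ZMod 2))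
    {x : G} (hx : f x ≠ 1) : f.ker.index = 2 := by
  have hsurj : Function.Surjective f := fun y => by
    by_cases hy : y = 1
    · exact ⟨1, by rw [hy, map_one]⟩
    · exact ⟨x, by revert hx hy; generalize f x = z; revert y z; decide⟩
  rw [Subgroup.index_ker, MonoidHom.range_eq_top.mpr hsurj, Subgroup.card_top,
    Nat.card_eq_fintype_card]
  rfl

namespace ZMod

variable {n p : ℕ} [Fact p.Prime] (hpn : p ∣ n)

def residueOneOr (a : ZMod n) : Set (ZMod n) := insert a {x | castHom hpn (ZMod p) x = 1}

lemma zero_notMem_residueOneOr {a : ZMod n} (ha : a ≠ 0) : 0 ∉ residueOneOr hpn a := by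
  simp [residueOneOr, ha.symm]

lemma castHom_natCast_val_s17 (y : ZMod p) : castHom hpn (ZMod p) (y.val : ZMod n) = y := by
  rw [map_natCast, natCast_zmod_val]

lemma castHom_natCast_self : castHom hpn (ZMod p) (p : ZMod n) = 0 := by
  rw [map_natCast, natCast_self]

def doubleSubLift (x : ZMod n) : ZMod n := 2 * x - (castHom hpn (ZMod p) x).val

lemma castHom_doubleSubLift (x : ZMod n) :
    castHom hpn (ZMod p) (doubleSubLift hpn x) = castHom hpn (ZMod p) x := by
  rw [doubleSubLift, map_sub, map_mul, map_ofNat, castHom_natCast_val_s17]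
  ring

variable {hpn} in
lemma doubleSubLift_sub_doubleSubLift {a b : ZMod n}
    (hab : castHom hpn (ZMod p) a = castHom hpn (ZMod p) b) :
    doubleSubLift hpn a - doubleSubLift hpn b = 2 * (a - b) := by
  rw [doubleSubLift, doubleSubLift, hab]
  ring

lemma doubleSubLift_injective (h2 : IsUnit (2 : ZMod n)) :
    Function.Injective (doubleSubLift hpn) :=
  fun a b hab => by
    have hc := castHom_doubleSubLift hpn a
    rw [hab, castHom_doubleSubLift] at hc
    rw [← sub_eq_zero, ← h2.mul_right_eq_zero, ← doubleSubLift_sub_doubleSubLift hc.symm, hab,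
      sub_self]

lemma doubleSubLift_sub_mem_iff (h2 : IsUnit (2 : ZMod n)) (a b : ZMod n) :
    doubleSubLift hpn b - doubleSubLift hpn a ∈ residueOneOr hpn (2 * p) ↔
      b - a ∈ residueOneOr hpn p := by
  have hc : castHom hpn (ZMod p) (doubleSubLift hpn b - doubleSubLift hpn a) =
      castHom hpn (ZMod p) (b - a) := by
    rw [map_sub, map_sub, castHom_doubleSubLift, castHom_doubleSubLift]
  simp only [residueOneOr, Set.mem_insert_iff, Set.mem_ofPred_eq, hc]
  refine or_congr_left ⟨fun h => ?_, fun h => ?_⟩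
  · have hba : castHom hpn (ZMod p) b = castHom hpn (ZMod p) a := by
      rw [← sub_eq_zero, ← map_sub, ← hc, h, map_mul, castHom_natCast_self, mul_zero]
    rw [doubleSubLift_sub_doubleSubLift hba] at h
    exact h2.mul_left_cancel h
  · have hba : castHom hpn (ZMod p) b = castHom hpn (ZMod p) a := by
      rw [← sub_eq_zero, ← map_sub, h, castHom_natCast_self]
    rw [doubleSubLift_sub_doubleSubLift hba, h]

lemma castHom_eq_zero_of_mul_eq_zero [NeZero n] (hpp : p * p ∣ n) {x : ZMod n}
    (hx : x * p = 0) : castHom hpn (ZMod p) x = 0 := by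
  rw [← natCast_zmod_val x, ← Nat.cast_mul, natCast_eq_zero_iff] at hx
  rw [← natCast_zmod_val x, map_natCast, natCast_eq_zero_iff]
  exact Nat.dvd_of_mul_dvd_mul_right (Fact.out : p.Prime).pos (hpp.trans hx)

lemma mul_image_residueOneOr_ne [NeZero n] (hp2 : p ≠ 2) (hpp : p * p ∣ n) (w : ZMod n) :
    (w * ·) '' residueOneOr hpn p ≠ residueOneOr hpn (2 * p) := by
  intro hw
  have hmem : ∀ x ∈ residueOneOr hpn p, w * x ∈ residueOneOr hpn (2 * p) :=
    fun x hx => hw ▸ Set.mem_image_of_mem _ hx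
  have hw1 := hmem 1 (Or.inr (map_one _))
  have hwp : w * p = 2 * p := (hmem p (Or.inl rfl)).resolve_right fun h => by
    rw [Set.mem_ofPred_eq, map_mul, castHom_natCast_self, mul_zero] at h
    exact zero_ne_one h
  have hw2 : castHom hpn (ZMod p) w = 2 := by
    have := castHom_eq_zero_of_mul_eq_zero hpn hpp (x := w - 2) (by rw [sub_mul, hwp, sub_self])
    rwa [map_sub, map_ofNat, sub_eq_zero] at this
  rw [mul_one] at hw1
  rcases hw1 with hw1 | hw1
  · rw [hw1, map_mul, castHom_natCast_self, mul_zero, eq_comm] at hw2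
    have : p ∣ 2 := by exact_mod_cast (natCast_eq_zero_iff 2 p).mp hw2
    exact hp2 ((Nat.prime_dvd_prime_iff_eq Fact.out Nat.prime_two).mp this)
  · rw [Set.mem_ofPred_eq, hw2] at hw1
    have : (1 : ZMod p) = 0 := by linear_combination hw1
    exact one_ne_zero this

end ZMod

namespace DihedralGroup

variable {n : ℕ}

lemma r_injective : Function.Injective (r : ZMod n → DihedralGroup n) := fun _ _ h => r.inj h

/- The rotation subgroup is `ker (toZModTwo h2 0 1)`, and `ker (toZModTwo h2 1 0)` is
`{r (2i), sr (2i)}`. -/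
def toZModTwo (h2 : 2 ∣ n) (a b : ZMod 2) : DihedralGroup n →* Multiplicative (ZMod 2) where
  toFun
    | r i => .ofAdd (a * ZMod.castHom h2 (ZMod 2) i)
    | sr i => .ofAdd (a * ZMod.castHom h2 (ZMod 2) i + b)
  map_one' := by rw [one_def]; simp
  map_mul' := by
    rintro (i | i) (j | j) <;>
      simp only [r_mul_r, r_mul_sr, sr_mul_r, sr_mul_sr, map_add, map_sub, ← ofAdd_add] <;>
      congr 1 <;>
      generalize ZMod.castHom h2 (ZMod 2) i = x <;> generalize ZMod.castHom h2 (ZMod 2) j = y <;>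
      revert a b x y <;> decide

@[simp] lemma toZModTwo_r (h2 : 2 ∣ n) (a b : ZMod 2) (i : ZMod n) :
    toZModTwo h2 a b (r i) = .ofAdd (a * ZMod.castHom h2 (ZMod 2) i) := rfl

@[simp] lemma toZModTwo_sr (h2 : 2 ∣ n) (a b : ZMod 2) (i : ZMod n) :
    toZModTwo h2 a b (sr i) = .ofAdd (a * ZMod.castHom h2 (ZMod 2) i + b) := rfl

lemma orderOf_lt_of_mem_ker_toZModTwo [NeZero n] (h2 : 2 ∣ n) (hn : 4 ≤ n)
    {x : DihedralGroup n} (hx : x ∈ (toZModTwo h2 1 0).ker) : orderOf x < n := by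
  rcases x with i | i
  · obtain ⟨t, ht⟩ : 2 ∣ i.val := by
      rwa [MonoidHom.mem_ker, toZModTwo_r, one_mul, ofAdd_eq_one, ZMod.castHom_apply,
        ← ZMod.natCast_val, ZMod.natCast_eq_zero_iff] at hx
    have hpow : r i ^ (n / 2) = 1 := by
      rw [r_pow, one_def, ← ZMod.natCast_zmod_val i, ← Nat.cast_mul,
        (ZMod.natCast_eq_zero_iff _ _).mpr]
      rw [ht, mul_comm 2, mul_assoc, Nat.mul_div_cancel' h2]
      exact dvd_mul_left n t
    calc orderOf (r i) ≤ n / 2 := orderOf_le_of_pow_eq_one (by omega) hpow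
      _ < n := by omega
  · rw [orderOf_sr]
    omega

lemma exists_not_isCIDigraph_of_even (h2 : 2 ∣ n) (hn : 4 ≤ n) :
    ∃ S : Set (DihedralGroup n), 1 ∉ S ∧ ¬ IsCIDigraph S := by
  have : NeZero n := ⟨by omega⟩
  refine ⟨((toZModTwo h2 0 1).ker : Set (DihedralGroup n)) \ {1}, by simp, fun hS => ?_⟩
  have hindex : (toZModTwo h2 0 1).ker.index = (toZModTwo h2 1 0).ker.index := by
    rw [(toZModTwo h2 0 1).index_ker_eq_two (x := sr 0) (by simp),
      (toZModTwo h2 1 0).index_ker_eq_two (x := r 1) (by rw [toZModTwo_r, map_one]; decide)]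
  obtain ⟨α, hα⟩ := hS.exists_map_eq hindex
  have hr : α (r 1) ∈ (toZModTwo h2 1 0).ker :=
    hα ▸ Subgroup.mem_map_of_mem _ (by simp)
  have hlt := orderOf_lt_of_mem_ker_toZModTwo h2 hn hr
  rw [MulEquiv.orderOf_eq, orderOf_r_one] at hlt
  exact hlt.false

-- The reflections are moved by `-e (-·)` since `sr j * (sr i)⁻¹ = r (i - j)`.
def extendPerm (e : ZMod n ≃ ZMod n) : Equiv.Perm (DihedralGroup n) where
  toFun
    | r i => r (e i)
    | sr i => sr (-e (-i))
  invFun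
    | r i => r (e.symm i)
    | sr i => sr (-e.symm (-i))
  left_inv := by rintro (i | i) <;> simp
  right_inv := by rintro (i | i) <;> simp

lemma nonempty_relIso_cayRel_image_r {A B : Set (ZMod n)} (e : ZMod n ≃ ZMod n)
    (he : ∀ a b, e b - e a ∈ B ↔ b - a ∈ A) : Nonempty (cayRel (r '' A) ≃r cayRel (r '' B)) := by
  refine ⟨⟨extendPerm e, fun {x y} => ?_⟩⟩
  rcases x with i | i <;> rcases y with j | j <;>
    simp [cayRel, extendPerm, r_injective.mem_set_image, ← sub_eq_add_neg, he]
  simpa [neg_add_eq_sub] using he (-i) (-j)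

lemma exists_mulEquiv_apply_r (hn : 3 ≤ n) (α : DihedralGroup n ≃* DihedralGroup n) :
    ∃ g : ZMod n, ∀ x, α (r x) = r (g * x) := by
  have : NeZero n := ⟨by omega⟩
  have hord : orderOf (α (r 1)) = n := by rw [MulEquiv.orderOf_eq, orderOf_r_one]
  rcases hα : α (r 1) with g | g
  · refine ⟨g, fun x => ?_⟩
    rw [← ZMod.natCast_zmod_val x, ← r_one_pow, map_pow, hα, r_pow]
  · rw [hα, orderOf_sr] at hord
    omega

lemma exists_mul_image_eq_of_isCIDigraph (hn : 3 ≤ n) {A B : Set (ZMod n)}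
    (hA : IsCIDigraph (r '' A)) (hB : 0 ∉ B) (e : ZMod n ≃ ZMod n)
    (he : ∀ a b, e b - e a ∈ B ↔ b - a ∈ A) : ∃ g : ZMod n, (g * ·) '' A = B := by
  obtain ⟨α, hα⟩ := hA (r '' B) (by rwa [← r_zero, r_injective.mem_set_image])
    (nonempty_relIso_cayRel_image_r e he)
  obtain ⟨g, hg⟩ := exists_mulEquiv_apply_r hn α
  refine ⟨g, r_injective.image_injective ?_⟩
  rw [← hα, Set.image_image, Set.image_image]
  exact Set.image_congr fun x _ => (hg x).symm

lemma exists_not_isCIDigraph_of_mul_self_dvd {p : ℕ} (hn : Odd n) (hp : p.Prime)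
    (hpp : p * p ∣ n) : ∃ S : Set (DihedralGroup n), 1 ∉ S ∧ ¬ IsCIDigraph S := by
  have : Fact p.Prime := ⟨hp⟩
  have : NeZero n := ⟨hn.pos.ne'⟩
  have hpn : p ∣ n := (dvd_mul_right p p).trans hpp
  have hpn' : p * p ≤ n := Nat.le_of_dvd hn.pos hpp
  have hp2 : p ≠ 2 := by
    rintro rfl
    exact Nat.not_even_iff_odd.mpr hn (even_iff_two_dvd.mpr hpn)
  have h2 : IsUnit (2 : ZMod n) := by
    exact_mod_cast (ZMod.isUnit_iff_coprime 2 n).mpr (Nat.coprime_two_left.mpr hn)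
  have hp0 : (p : ZMod n) ≠ 0 := fun h => by
    have := Nat.le_of_dvd hp.pos ((ZMod.natCast_eq_zero_iff p n).mp h)
    nlinarith [hp.two_le]
  have h3 : 3 ≤ n := by nlinarith [hp.two_le]
  refine ⟨r '' ZMod.residueOneOr hpn p, ?_, fun hCI => ?_⟩
  · rw [← r_zero, r_injective.mem_set_image]
    exact ZMod.zero_notMem_residueOneOr hpn hp0
  · obtain ⟨g, hg⟩ := exists_mul_image_eq_of_isCIDigraph h3 hCI
      (ZMod.zero_notMem_residueOneOr hpn (h2.mul_right_eq_zero.not.mpr hp0))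
      (.ofBijective _ (Finite.injective_iff_bijective.mp (ZMod.doubleSubLift_injective hpn h2)))
      (ZMod.doubleSubLift_sub_mem_iff hpn h2)
    exact ZMod.mul_image_residueOneOr_ne hpn hp2 hpp g hg

end DihedralGroup

/-- If `D_{2n}` (`n ≥ 2`) is a DCI-group, then `n = 2` or `n` is odd
and square-free. -/
theorem stmt17 (n : ℕ) (hn : 2 ≤ n)
    (h : ∀ S : Set (DihedralGroup n), (1 : DihedralGroup n) ∉ S → IsCIDigraph S) :
    n = 2 ∨ (Odd n ∧ Squarefree n) := by
  have hnot {S : Set (DihedralGroup n)} : ¬ (1 ∉ S ∧ ¬ IsCIDigraph S) := fun hS =>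
    hS.2 (h S hS.1)
  rcases Nat.even_or_odd n with he | ho
  · refine (eq_or_lt_of_le hn).elim (fun h2 => .inl h2.symm) fun hlt => ?_
    obtain ⟨S, hS⟩ := DihedralGroup.exists_not_isCIDigraph_of_even (even_iff_two_dvd.mp he)
      (by obtain ⟨k, rfl⟩ := he; omega)
    exact (hnot hS).elim
  · refine .inr ⟨ho, Nat.squarefree_iff_prime_squarefree.mpr fun p hp hpp => ?_⟩
    obtain ⟨S, hS⟩ := DihedralGroup.exists_not_isCIDigraph_of_mul_self_dvd ho hp hpp
    exact hnot hS
end
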